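/- arXiv:2308.14535 — 2 statements merged into one kernel-verified Lean document; each statement's English description precedes it below -/
import Mathlib

section
/- Let k, q > 1 and 1 < n_1 ≤ ... ≤ n_k be integers. Let I_1, ..., I_q ⊆ [n_1] × ... × [n_k] be non-empty subsets such that either I_i ≠ I_j for some i ≠ j, or I_1 is not of the form H_ℓ(S) for any ℓ and S ⊆ [n_ℓ]. Then there exists a q-tuple (M_1,...,M_q) of rational arrays such that all hyperplane sums Σ_{m ∈ H_ℓ(r)} (M_s)_m agree across s ∈ {1,...,q} for every ℓ, r, but the sums Σ_{m ∈ I_s} (M_s)_m do not all agree across s. -/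
/-!
If two of the `I_s` differ, the same unit array at a point of their symmetric difference, taken
`q` times, works. Otherwise use the array that is `±1` on the corners of a two-dimensional
axis-parallel rectangle (and `0` elsewhere) as `M_1`, and `0` for the other `M_s`: every
hyperplane meets the rectangle in an edge or not at all, so all hyperplane sums vanish, while the
sum over `I_1` is the alternating sum of the indicator of `I_1` over the corners. If all these
alternating sums vanished, the indicator would be additively separable in the coordinates; a
`0/1`-valued separable function depends on one coordinate only, i.e. `I_1 = H_ℓ(S)`.
-/

open Function Finset

section

variable {ι : Type*} [DecidableEq ι] {β : ι → Type*}

lemma dependsOn_singleton_of_update_eq [Fintype ι] {γ : Type*} {f : (Π i, β i) → γ} {ℓ : ι}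
    (hf : ∀ x j (c : β j), j ≠ ℓ → f (update x j c) = f x) : DependsOn f {ℓ} := by
  intro x y hxy
  have hpiece : ∀ s : Finset ι, ℓ ∉ s → f (s.piecewise y x) = f x := by
    intro s
    induction s using Finset.induction_on with
    | empty => simp
    | insert j s hj ih =>
      intro hℓ
      rw [piecewise_insert, hf _ _ _ (ne_of_mem_of_not_mem (mem_insert_self j s) hℓ),
        ih (fun h => hℓ (mem_insert_of_mem h))]
  have := hpiece (univ.erase ℓ) (notMem_erase ℓ univ)
  rwa [piecewise_erase_univ, hxy ℓ rfl, update_eq_self, eq_comm] at this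

def rectangleSum {R : Type*} [AddCommGroup R] (f : (Π i, β i) → R) (x : Π i, β i)
    {ℓ₁ ℓ₂ : ι} (a : β ℓ₁) (c : β ℓ₂) : R :=
  f x - f (update x ℓ₁ a) - f (update x ℓ₂ c) + f (update (update x ℓ₁ a) ℓ₂ c)

def HasZeroRectangleSums {R : Type*} [AddCommGroup R] (f : (Π i, β i) → R) : Prop :=
  ∀ x {ℓ₁ ℓ₂ : ι}, ℓ₁ ≠ ℓ₂ → ∀ (a : β ℓ₁) (c : β ℓ₂), rectangleSum f x a c = 0

variable {R : Type*} [AddCommGroup R]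

lemma DependsOn.hasZeroRectangleSums {f : (Π i, β i) → R} {ℓ : ι} (hf : DependsOn f {ℓ}) :
    HasZeroRectangleSums f := by
  intro x ℓ₁ ℓ₂ h a c
  have hupd : ∀ y j (b : β j), j ≠ ℓ → f (Function.update y j b) = f y :=
    fun y j b hj => hf fun i hi => by rw [Set.mem_singleton_iff.mp hi, update_of_ne hj.symm]
  unfold rectangleSum
  rcases eq_or_ne ℓ₁ ℓ with rfl | h₁
  · rw [hupd _ _ _ h.symm, hupd _ _ _ h.symm]; abel
  · rw [update_comm h, hupd _ _ _ h₁, hupd _ _ _ h₁]; abel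

lemma HasZeroRectangleSums.update_sub_update_eq [Fintype ι] {f : (Π i, β i) → R}
    (hf : HasZeroRectangleSums f) (ℓ : ι) (a b : β ℓ) (x y : Π i, β i) :
    f (update x ℓ a) - f (update x ℓ b) = f (update y ℓ a) - f (update y ℓ b) := by
  set G : (Π i, β i) → R := fun x => f (update x ℓ a) - f (update x ℓ b)
  have hG : ∀ x j (c : β j), j ≠ ℓ → G (update x j c) = G x := by
    intro x j c hj
    have ha := hf x hj.symm a c
    have hb := hf x hj.symm b c
    simp only [G, rectangleSum, update_comm hj] at ha hb ⊢
    rw [← sub_eq_zero, ← sub_eq_zero.mpr ha, ← sub_eq_zero.mpr hb]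
    abel
  calc G x = G (update x ℓ (y ℓ)) := by simp only [G, update_idem]
    _ = G y := dependsOn_singleton_of_update_eq hG fun i hi => by
      rw [Set.mem_singleton_iff.mp hi, update_self]

lemma eq_of_sub_eq_sub_of_ne {u v u' v' : ℚ} (hu : u = 0 ∨ u = 1) (hv : v = 0 ∨ v = 1)
    (hu' : u' = 0 ∨ u' = 1) (hv' : v' = 0 ∨ v' = 1) (h : u - v = u' - v') (huv' : u' ≠ v') :
    u = u' := by
  rcases hu with rfl | rfl <;> rcases hv with rfl | rfl <;> rcases hu' with rfl | rfl <;>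
    rcases hv' with rfl | rfl <;> norm_num at *

theorem HasZeroRectangleSums.exists_dependsOn_singleton [Fintype ι] [Nonempty ι]
    {f : (Π i, β i) → ℚ} (hf : HasZeroRectangleSums f) (h01 : ∀ x, f x = 0 ∨ f x = 1) :
    ∃ ℓ, DependsOn f {ℓ} := by
  by_cases hconst : ∀ x j (c : β j), f (update x j c) = f x
  · exact ⟨Classical.arbitrary ι, dependsOn_singleton_of_update_eq fun x j c _ => hconst x j c⟩
  push Not at hconst
  obtain ⟨z, ℓ, a, hz⟩ := hconst
  refine ⟨ℓ, dependsOn_singleton_of_update_eq fun x j c hj => ?_⟩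
  -- The jump of `f` at `z` in coordinate `ℓ` is `±1` and the same at every point, which pins down
  -- the `0/1` value `f (update y ℓ a)`.
  have hℓ : ∀ y, f (update y ℓ a) = f (update z ℓ a) := fun y =>
    eq_of_sub_eq_sub_of_ne (h01 _) (h01 _) (h01 _) (h01 _)
      (hf.update_sub_update_eq ℓ a (z ℓ) y z) (by rwa [update_eq_self])
  have := hf.update_sub_update_eq j c (x j) x (update x ℓ a)
  rwa [update_comm hj.symm, update_comm hj.symm, hℓ (update x j c), hℓ (update x j (x j)),
    sub_self, update_eq_self, sub_eq_zero] at this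

section Arrays

variable [DecidableEq (Π i, β i)]

def rectangleArray (x : Π i, β i) {ℓ₁ ℓ₂ : ι} (a : β ℓ₁) (c : β ℓ₂) : (Π i, β i) → ℚ :=
  rectangleSum (fun p => Pi.single p 1) x a c

lemma sum_rectangleArray (T : Finset (Π i, β i)) (x : Π i, β i) {ℓ₁ ℓ₂ : ι} (a : β ℓ₁)
    (c : β ℓ₂) :
    ∑ y ∈ T, rectangleArray x a c y = rectangleSum (fun p => if p ∈ T then 1 else 0) x a c := by
  simp [rectangleArray, rectangleSum, sum_add_distrib, sum_sub_distrib, Pi.single_apply]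

variable [Fintype ι] [∀ i, Fintype (β i)] [∀ i, DecidableEq (β i)]

lemma sum_filter_rectangleArray_eq_zero (ℓ : ι) (r : β ℓ) (x : Π i, β i) {ℓ₁ ℓ₂ : ι}
    (h : ℓ₁ ≠ ℓ₂) (a : β ℓ₁) (c : β ℓ₂) :
    ∑ y ∈ univ.filter (fun y => y ℓ = r), rectangleArray x a c y = 0 := by
  rw [sum_rectangleArray]
  refine DependsOn.hasZeroRectangleSums (ℓ := ℓ) (fun y z hyz => ?_) x h a c
  simp [hyz ℓ rfl]

lemma HasZeroRectangleSums.exists_eq_filter [Nonempty ι] {I : Finset (Π i, β i)}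
    (hI : HasZeroRectangleSums fun p => if p ∈ I then (1 : ℚ) else 0) :
    ∃ (ℓ : ι) (S : Finset (β ℓ)), I = univ.filter (fun x => x ℓ ∈ S) := by
  obtain ⟨ℓ, hℓ⟩ := hI.exists_dependsOn_singleton fun p => by by_cases hp : p ∈ I <;> simp [hp]
  refine ⟨ℓ, I.image (· ℓ), ext fun x => ⟨fun hx => by simpa using ⟨x, hx, rfl⟩, fun hx => ?_⟩⟩
  obtain ⟨y, hy, hyx⟩ := mem_image.mp (mem_filter.mp hx).2
  have := @hℓ x y (fun i hi => by rw [Set.mem_singleton_iff.mp hi, hyx])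
  simpa [hy] using this

end Arrays

end

/-- If non-empty subsets `I_1, …, I_q` of `[n_1] × ⋯ × [n_k]` are not all equal, or `I_1`
is not a union of parallel coordinate hyperplanes, then there is a `q`-tuple of rational
arrays all of whose coordinate-hyperplane sums agree across the tuple, while the sums over
the `I_s` do not all agree (i.e. `Z̄ \ Z_{I_1,…,I_q} ≠ ∅`). -/
theorem stmt8 (k q : ℕ) (hk : 1 < k) (hq : 1 < q)
    (n : Fin k → ℕ)
    (I : Fin q → Finset (∀ i : Fin k, Fin (n i)))
    (hI : (∃ s t : Fin q, I s ≠ I t) ∨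
      ¬ ∃ (ℓ : Fin k) (S : Finset (Fin (n ℓ))),
        I ⟨0, by omega⟩ = Finset.univ.filter (fun x => x ℓ ∈ S)) :
    ∃ M : Fin q → (∀ i : Fin k, Fin (n i)) → ℚ,
      (∀ (ℓ : Fin k) (r : Fin (n ℓ)) (s t : Fin q),
        ∑ x ∈ Finset.univ.filter (fun x => x ℓ = r), M s x =
          ∑ x ∈ Finset.univ.filter (fun x => x ℓ = r), M t x) ∧
      ∃ s t : Fin q, ∑ x ∈ I s, M s x ≠ ∑ x ∈ I t, M t x := by
  rcases hI with ⟨s, t, hst⟩ | hI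
  · obtain ⟨x, hx⟩ : ∃ x, ¬(x ∈ I s ↔ x ∈ I t) := by
      by_contra! h
      exact hst (ext h)
    refine ⟨fun _ => Pi.single x 1, fun _ _ _ _ => rfl, s, t, ?_⟩
    by_cases hs : x ∈ I s <;> simp_all
  · have : Nonempty (Fin k) := ⟨⟨0, by omega⟩⟩
    set i₀ : Fin q := ⟨0, by omega⟩
    have hrect : ¬ HasZeroRectangleSums fun p => if p ∈ I i₀ then (1 : ℚ) else 0 :=
      fun h => hI h.exists_eq_filter
    simp only [HasZeroRectangleSums, not_forall] at hrect
    obtain ⟨x, ℓ₁, ℓ₂, h, a, c, hx⟩ := hrect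
    set M : Fin q → (∀ i : Fin k, Fin (n i)) → ℚ := Pi.single i₀ (rectangleArray x a c)
    have hzero : ∀ (ℓ : Fin k) (r : Fin (n ℓ)) s,
        ∑ y ∈ univ.filter (fun y => y ℓ = r), M s y = 0 := by
      intro ℓ r s
      rcases eq_or_ne s i₀ with rfl | hs
      · simpa [M] using sum_filter_rectangleArray_eq_zero ℓ r x h a c
      · simp [M, hs]
    refine ⟨M, fun ℓ r s t => by rw [hzero, hzero], i₀, ⟨1, hq⟩, ?_⟩
    simp [M, i₀, sum_rectangleArray, hx]
end

section
/- Let D be a unique factorization domain. If the residue field D/P is infinite for every height-one prime ideal P of D, then Int(D) = D[X] and Int(D) is a unique factorization domain. -/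
open Polynomial

/-- A height-one prime ideal: a minimal nonzero prime. -/
def HeightOnePrime (D : Type*) [CommRing D] (P : Ideal D) : Prop :=
  P.IsPrime ∧ P ≠ ⊥ ∧ ∀ Q : Ideal D, Q.IsPrime → Q < P → Q = ⊥

/-- The ring of integer-valued polynomials `Int(D) ⊆ K[X]`. -/
noncomputable def IntPolySubring (D K : Type*) [CommRing D] [CommRing K] [Algebra D K] :
    Subring (Polynomial K) :=
  ⨅ a : D, Subring.comap (Polynomial.evalRingHom (algebraMap D K a)) (algebraMap D K).range

/-!
Let `f ∈ Int(D)` and clear denominators: `d • f = g` with `g ∈ D[X]`, `d ≠ 0`. Then `d` divides every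
value `g(a)`, `a ∈ D`. For a prime factor `p` of `d`, the reduction of `g` modulo `p` vanishes on the
infinite domain `D/pD`, so it is zero and `p` divides `g`; dividing out and inducting on the prime
factorisation of `d` gives `d ∣ g`, i.e. `f ∈ D[X]`; and `D[X]` is a UFD since `D` is.
-/

theorem Prime.heightOnePrime_span_singleton {D : Type*} [CommRing D] [IsDomain D]
    [UniqueFactorizationMonoid D] {p : D} (hp : Prime p) :
    HeightOnePrime D (Ideal.span {p}) := by
  refine ⟨(Ideal.span_singleton_prime hp.ne_zero).2 hp, by simpa using hp.ne_zero, ?_⟩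
  intro Q hQ hQp
  by_contra hQ0
  obtain ⟨r, hrQ, hr⟩ := hQ.exists_mem_prime_of_ne_bot hQ0
  have hpr : p ∣ r := Ideal.mem_span_singleton.1 (hQp.le hrQ)
  obtain ⟨u, hu⟩ := (hp.irreducible.associated_of_dvd hr.irreducible hpr).symm
  have hpQ : p ∈ Q := hu ▸ Q.mul_mem_right _ hrQ
  exact hQp.not_ge ((Ideal.span_singleton_le_iff_mem Q).2 hpQ)

theorem Polynomial.coeff_mem_of_forall_eval_mem {R : Type*} [CommRing R] {P : Ideal R}
    [P.IsPrime] [Infinite (R ⧸ P)] {g : R[X]} (h : ∀ a, g.eval a ∈ P) (i : ℕ) :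
    g.coeff i ∈ P := by
  have hg : g.map (Ideal.Quotient.mk P) = 0 := Polynomial.funext fun x => by
    obtain ⟨a, rfl⟩ := Ideal.Quotient.mk_surjective x
    simpa [eval_map_apply, Ideal.Quotient.eq_zero_iff_mem] using h a
  simpa [Ideal.Quotient.eq_zero_iff_mem] using congrArg (coeff · i) hg

theorem Polynomial.C_dvd_of_forall_dvd_eval {D : Type*} [CommRing D] [IsDomain D]
    [UniqueFactorizationMonoid D] (hinf : ∀ p : D, Prime p → Infinite (D ⧸ Ideal.span {p}))
    {d : D} (hd : d ≠ 0) {g : D[X]} (h : ∀ a, d ∣ g.eval a) : C d ∣ g := by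
  induction d using UniqueFactorizationMonoid.induction_on_prime generalizing g with
  | h₁ => exact absurd rfl hd
  | h₂ u hu => exact (C.isUnit_map hu).dvd
  | h₃ d p hd0 hp ih =>
    have := hinf p hp
    have := (Ideal.span_singleton_prime hp.ne_zero).2 hp
    obtain ⟨g', rfl⟩ : C p ∣ g := (C_dvd_iff_dvd_coeff p g).2 fun i =>
      Ideal.mem_span_singleton.1 <| coeff_mem_of_forall_eval_mem
        (fun a => Ideal.mem_span_singleton.2 <| dvd_of_mul_right_dvd (h a)) i
    have hg' : ∀ a, d ∣ g'.eval a := fun a =>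
      (mul_dvd_mul_iff_left hp.ne_zero).1 (by simpa using h a)
    simpa using mul_dvd_mul_left (C p) (ih hd0 hg')

theorem mem_intPolySubring_iff {D K : Type*} [CommRing D] [CommRing K] [Algebra D K] {f : K[X]} :
    f ∈ IntPolySubring D K ↔ ∀ a : D, ∃ c : D, algebraMap D K c = f.eval (algebraMap D K a) := by
  simp [IntPolySubring, Subring.mem_iInf]

theorem intPolySubring_eq_range_mapRingHom {D K : Type*} [CommRing D] [IsDomain D]
    [UniqueFactorizationMonoid D] [Field K] [Algebra D K] [IsFractionRing D K]
    (hinf : ∀ p : D, Prime p → Infinite (D ⧸ Ideal.span {p})) :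
    IntPolySubring D K = (mapRingHom (algebraMap D K)).range := by
  have hinj := IsFractionRing.injective D K
  ext f
  rw [mem_intPolySubring_iff]
  constructor
  · intro hf
    obtain ⟨d, hd, hdf⟩ := IsLocalization.integerNormalization_spec (nonZeroDivisors D) f
    set g := IsLocalization.integerNormalization (nonZeroDivisors D) f
    have hd0 : d ≠ 0 := nonZeroDivisors.ne_zero hd
    have hdvd : ∀ a, d ∣ g.eval a := fun a => by
      obtain ⟨c, hc⟩ := hf a
      refine ⟨c, hinj ?_⟩
      rw [← eval_map_apply, hdf, map_mul, hc, Algebra.smul_def, Polynomial.algebraMap_apply, eval_mul,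
        eval_C]
    obtain ⟨g', hg'⟩ := C_dvd_of_forall_dvd_eval hinf hd0 hdvd
    have hcleared : C (algebraMap D K d) * g'.map (algebraMap D K) = C (algebraMap D K d) * f := by
      rwa [hg', Polynomial.map_mul, map_C, Algebra.smul_def, Polynomial.algebraMap_apply] at hdf
    exact ⟨g', mul_left_cancel₀ (C_ne_zero.2 ((map_ne_zero_iff _ hinj).2 hd0)) hcleared⟩
  · rintro ⟨g, rfl⟩ a
    exact ⟨g.eval a, by rw [coe_mapRingHom, eval_map_apply]⟩

theorem RingHom.uniqueFactorizationMonoid_range {R S : Type*} [CommRing R] [IsDomain R]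
    [UniqueFactorizationMonoid R] [CommRing S] {f : R →+* S} (hf : Function.Injective f) :
    UniqueFactorizationMonoid f.range :=
  (RingEquiv.ofLeftInverse (Function.leftInverse_invFun hf)).toMulEquiv.uniqueFactorizationMonoid
    inferInstance

/-- If `D` is a UFD all of whose height-one primes have infinite residue ring, then
`Int(D) = D[X]` (as subrings of `K[X]`) and `Int(D)` is a UFD. -/
theorem stmt12 (D : Type*) [CommRing D] [IsDomain D] [UniqueFactorizationMonoid D]
    (hres : ∀ P : Ideal D, HeightOnePrime D P → Infinite (D ⧸ P)) :
    IntPolySubring D (FractionRing D) =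
      (Polynomial.mapRingHom (algebraMap D (FractionRing D))).range ∧
    UniqueFactorizationMonoid (IntPolySubring D (FractionRing D)) := by
  have hInt := intPolySubring_eq_range_mapRingHom (K := FractionRing D) fun p hp =>
    hres _ hp.heightOnePrime_span_singleton
  refine ⟨hInt, ?_⟩
  rw [hInt]
  exact RingHom.uniqueFactorizationMonoid_range (map_injective _ (IsFractionRing.injective D _))
end
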